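/- For the reverse Bessel coefficient matrix C, the matrix obtained after two steps of Neville elimination satisfies the self-similarity property c^{(3)}_{ij} = c_{i-2,j-2} for 3 ≤ j ≤ i ≤ n; i.e., the trailing principal submatrix C^{(3)}[3,…,n] equals the leading principal submatrix C[1,…,n-2]. -/

import Mathlib

/-- Entries of the lower triangular reverse Bessel coefficient matrix. -/
noncomputable def revC (i j : ℕ) : ℝ :=
  if j ≤ i then ((2 * i - j - 1).factorial : ℝ) / (2 ^ (i - j) * (j - 1).factorial * (i - j).factorial)
  else 0

/-- `revNE k i j` is the `(i,j)` entry of `C^{(k+1)}`, the matrix obtained after `k`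
steps of Neville elimination of the reverse Bessel coefficient matrix. -/
noncomputable def revNE : ℕ → ℕ → ℕ → ℝ
  | 0, i, j => revC i j
  | k + 1, i, j =>
      if k + 1 ≤ j ∧ j < i ∧ revNE k (i - 1) (k + 1) ≠ 0 then
        revNE k i j - revNE k i (k + 1) / revNE k (i - 1) (k + 1) * revNE k (i - 1) j
      else revNE k i j

/-!
Column one of `C` consists of the double factorials `(2i-3)!!`, so the first Neville step
replaces row `i` by row `i` minus `2i-3` times row `i-1`. With `r = j-1` and `m = i-j`,
`(r+2m)(r+2m-1) - 2m(2r+2m-1) = r(r-1)` shows that this multiplies `c_{ij}` by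
`(j-1)(j-2)/((2i-j-1)(2i-j-2))`, which is `c_{i-2,j-2}`. In particular column two is
annihilated below the diagonal, so every pivot of the second step is zero and it changes nothing.
-/

open Nat

lemma revC_add_succ (r m : ℕ) :
    revC (r + m + 1) (r + 1) = ((r + 2 * m)! : ℝ) / (2 ^ m * r ! * m !) := by
  rw [revC, if_pos (by omega), show 2 * (r + m + 1) - (r + 1) - 1 = r + 2 * m by omega,
    show r + m + 1 - (r + 1) = m by omega, Nat.add_sub_cancel]

lemma revC_one_pos (m : ℕ) : 0 < revC (m + 1) 1 := by
  rw [show m + 1 = 0 + m + 1 by ring, revC_add_succ]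
  positivity

lemma revC_self (i : ℕ) : revC i i = 1 := by
  rcases i with _ | r
  · simp [revC]
  · simpa [factorial_ne_zero] using revC_add_succ r 0

lemma revC_succ_one (m : ℕ) : revC (m + 2) 1 = (2 * m + 1) * revC (m + 1) 1 := by
  have h1 := revC_add_succ 0 (m + 1)
  have h0 := revC_add_succ 0 m
  simp only [zero_add, factorial_zero] at h1 h0
  rw [h1, h0, show 2 * (m + 1) = 2 * m + 1 + 1 by ring, factorial_succ, factorial_succ,
    factorial_succ m, pow_succ]
  push_cast
  field_simp
  ring

lemma revC_neville_step (r m : ℕ) :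
    revC (r + m + 2) (r + 1) - (2 * (r + m) + 1) * revC (r + m + 1) (r + 1)
      = r * (r - 1) * (r + 2 * m)! / (2 ^ (m + 1) * r ! * (m + 1)!) := by
  rw [show r + m + 2 = r + (m + 1) + 1 by ring, revC_add_succ, revC_add_succ,
    show r + 2 * (m + 1) = r + 2 * m + 1 + 1 by ring, factorial_succ, factorial_succ,
    factorial_succ m, pow_succ]
  push_cast
  field_simp
  ring

lemma revC_neville_step_two (i : ℕ) (hi : 3 ≤ i) :
    revC i 2 - (2 * i - 3) * revC (i - 1) 2 = 0 := by
  obtain ⟨m, rfl⟩ : ∃ m, i = 1 + m + 2 := ⟨i - 3, by omega⟩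
  have h := revC_neville_step 1 m
  rw [show 1 + m + 2 - 1 = 1 + m + 1 by omega]
  push_cast at h ⊢
  linear_combination h

lemma revC_neville_step_shift (i j : ℕ) (hj : 3 ≤ j) (hji : j < i) :
    revC i j - (2 * i - 3) * revC (i - 1) j = revC (i - 2) (j - 2) := by
  obtain ⟨s, rfl⟩ : ∃ s, j = s + 2 + 1 := ⟨j - 3, by omega⟩
  obtain ⟨m, rfl⟩ : ∃ m, i = s + 2 + m + 2 := ⟨i - s - 4, by omega⟩
  have h := revC_neville_step (s + 2) m
  rw [show s + 2 + m + 2 - 1 = s + 2 + m + 1 by omega,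
    show s + 2 + m + 2 - 2 = s + (m + 1) + 1 by omega, show s + 2 + 1 - 2 = s + 1 by omega,
    revC_add_succ s (m + 1), show s + 2 * (m + 1) = s + 2 + 2 * m by ring]
  rw [factorial_succ (s + 1), factorial_succ s] at h
  push_cast at h ⊢
  linear_combination (norm := skip) h
  field_simp
  ring

lemma revNE_self (k i : ℕ) : revNE k i i = revC i i := by
  induction k with
  | zero => rfl
  | succ k ih => rw [revNE, if_neg (fun h => lt_irrefl i h.2.1), ih]

lemma revNE_one (i j : ℕ) (hj : 1 ≤ j) (hji : j < i) :
    revNE 1 i j = revC i j - (2 * i - 3) * revC (i - 1) j := by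
  obtain ⟨m, rfl⟩ : ∃ m, i = m + 2 := ⟨i - 2, by omega⟩
  have hpivot : revC (m + 1) 1 ≠ 0 := (revC_one_pos m).ne'
  rw [revNE, if_pos ⟨hj, hji, hpivot⟩]
  simp only [revNE, zero_add, show m + 2 - 1 = m + 1 from rfl, revC_succ_one]
  field_simp
  push_cast
  ring

theorem revBessel_NE_self_similarity_general (i j : ℕ) (hj : 3 ≤ j) (hji : j ≤ i) :
    revNE 2 i j = revC (i - 2) (j - 2) := by
  rcases hji.eq_or_lt with rfl | hlt
  · rw [revNE_self, revC_self, revC_self]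
  have hpivot : revNE 1 (i - 1) 2 = 0 := by
    rw [revNE_one (i - 1) 2 (by omega) (by omega)]
    exact revC_neville_step_two (i - 1) (by omega)
  rw [revNE, if_neg (fun h => h.2.2 hpivot), revNE_one i j (by omega) hlt]
  exact revC_neville_step_shift i j hj hlt

theorem revBessel_NE_self_similarity (n i j : ℕ) (hj : 3 ≤ j) (hji : j ≤ i) (hin : i ≤ n) :
    revNE 2 i j = revC (i - 2) (j - 2) :=
  revBessel_NE_self_similarity_general i j hj hji
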